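/- arXiv:math/0602627 — 5 statements merged into one kernel-verified Lean document; each statement's English description precedes it below -/
import Mathlib

section
/- Let G be a bipartite graph with parts A and B, |A| ≤ |B|, and minimum degree δ ≥ |B|/2 + 1. If x and y are two distinct vertices both in A or both in B, then G contains an x–y path of length t for every even t with 2 ≤ t ≤ 2(2δ - |A| - 1). -/
/-!
Two vertices `p, q` of `B` have all their neighbours in `A`, hence at least `2δ - |A|` common
neighbours. So a path between two vertices of `B` of length `2k` can be built greedily: walk
through `k - 1` further vertices of `B`, joining consecutive ones through a common neighbour in
`A` not used before; this is possible while `k ≤ 2δ - |A|`. Two vertices `x, y` of `A` are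
handled by first stepping to distinct neighbours in `B` and running the same construction there,
now also avoiding `x` and `y`.
-/

open SimpleGraph Finset

namespace SimpleGraph

lemma isPath_cons_cons_nil {V : Type*} {G : SimpleGraph V} {u a v : V} (hua : G.Adj u a)
    (hav : G.Adj a v) (huv : u ≠ v) : (Walk.cons hua (Walk.cons hav Walk.nil)).IsPath := by
  simp [hua.ne, hav.ne, huv]

variable {V : Type*} [Fintype V] {G : SimpleGraph V} [DecidableRel G.Adj]

lemma minDegree_le_card_neighborFinset (v : V) : G.minDegree ≤ #(G.neighborFinset v) :=
  G.card_neighborFinset_eq_degree v ▸ G.minDegree_le_degree v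

lemma minDegree_le_card_of_neighborFinset_subset {T : Finset V} {u : V}
    (hu : G.neighborFinset u ⊆ T) : G.minDegree ≤ #T :=
  (minDegree_le_card_neighborFinset u).trans (card_le_card hu)

lemma neighborFinset_subset_of_mem_left {A B : Finset V} (hAB : Disjoint A B)
    (hbip : ∀ u v, G.Adj u v → (u ∈ A ∧ v ∈ B) ∨ (u ∈ B ∧ v ∈ A)) {u : V} (hu : u ∈ A) :
    G.neighborFinset u ⊆ B := fun v hv =>
  ((hbip u v ((G.mem_neighborFinset u v).1 hv)).resolve_right
    fun h => Finset.disjoint_left.1 hAB hu h.1).2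

variable [DecidableEq V]

lemma two_mul_minDegree_le_card_add_card_inter_neighborFinset {T : Finset V} {u v : V}
    (hu : G.neighborFinset u ⊆ T) (hv : G.neighborFinset v ⊆ T) :
    2 * G.minDegree ≤ #T + #(G.neighborFinset u ∩ G.neighborFinset v) := by
  have := card_le_card (union_subset hu hv)
  have := card_inter_add_card_union (G.neighborFinset u) (G.neighborFinset v)
  have := minDegree_le_card_neighborFinset (G := G) u
  have := minDegree_le_card_neighborFinset (G := G) v
  omega

lemma exists_isPath_length_two_mul_of_le_card_commonNeighbors {S T : Finset V}
    (hST : Disjoint S T) {d : ℕ}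
    (hd : ∀ p ∈ S, ∀ q ∈ S, p ≠ q → d ≤ #(G.neighborFinset p ∩ G.neighborFinset q ∩ T))
    {u v : V} (hu : u ∈ S) (hv : v ∈ S) (huv : u ≠ v) {k : ℕ} (hk : 1 ≤ k) (hkd : k ≤ d)
    (hkS : k < #S) :
    ∃ w : G.Walk u v, w.IsPath ∧ w.length = 2 * k ∧ ∀ z ∈ w.support, z ∈ S ∪ T := by
  induction k, hk using Nat.le_induction generalizing S T d u with
  | base =>
    obtain ⟨a, ha⟩ := card_pos.1 (hkd.trans (hd u hu v hv huv))
    simp only [mem_inter, mem_neighborFinset] at ha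
    refine ⟨_, isPath_cons_cons_nil ha.1.1 ha.1.2.symm huv, rfl, ?_⟩
    simp_all
  | succ k hk ih =>
    obtain ⟨c, hc⟩ : ((S.erase u).erase v).Nonempty := by
      have := pred_card_le_card_erase (s := S) (a := u)
      have := pred_card_le_card_erase (s := S.erase u) (a := v)
      rw [← card_pos]; omega
    simp only [mem_erase] at hc
    obtain ⟨a, ha⟩ := card_pos.1 ((show 0 < d by omega).trans_le (hd u hu c hc.2.2 hc.2.1.symm))
    simp only [mem_inter, mem_neighborFinset] at ha
    have haS : a ∉ S := Finset.disjoint_right.1 hST ha.2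
    have huT : u ∉ T := Finset.disjoint_left.1 hST hu
    obtain ⟨w, hw, hlen, hsupp⟩ := ih (S := S.erase u) (T := T.erase a) (d := d - 1)
      (disjoint_of_subset_left (erase_subset u S) (disjoint_of_subset_right (erase_subset a T) hST))
      (fun p hp q hq hpq => by
        rw [inter_erase]
        exact (Nat.sub_le_sub_right (hd p (mem_of_mem_erase hp) q (mem_of_mem_erase hq) hpq) 1).trans
          pred_card_le_card_erase)
      (mem_erase.2 ⟨hc.2.1, hc.2.2⟩) (mem_erase.2 ⟨huv.symm, hv⟩) hc.1 (by omega)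
      (by rw [card_erase_of_mem hu]; omega)
    refine ⟨Walk.cons ha.1.1 (Walk.cons ha.1.2.symm w), ?_, by simp [hlen]; ring, ?_⟩
    · have haw : a ∉ w.support := fun h => by simpa [haS] using hsupp a h
      have huw : u ∉ w.support := fun h => by simpa [huT] using hsupp u h
      simp [hw, haw, huw, ha.1.1.ne]
    · simp only [Walk.support_cons, List.mem_cons]
      rintro z (rfl | rfl | hz)
      · exact mem_union_left _ hu
      · exact mem_union_right _ ha.2
      · exact union_subset_union (erase_subset u S) (erase_subset a T) (hsupp z hz)

lemma exists_isPath_length_two_mul_of_mem_right {A B : Finset V} (hAB : Disjoint A B)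
    (hB : ∀ b ∈ B, G.neighborFinset b ⊆ A) (F : Finset V) {u v : V} (hu : u ∈ B)
    (hv : v ∈ B) (huv : u ≠ v) {k : ℕ} (hk : 1 ≤ k) (hkδ : k + #F + #A ≤ 2 * G.minDegree)
    (hkB : k < #B) :
    ∃ w : G.Walk u v, w.IsPath ∧ w.length = 2 * k ∧ ∀ z ∈ w.support, z ∈ B ∪ A \ F := by
  refine exists_isPath_length_two_mul_of_le_card_commonNeighbors
    (d := 2 * G.minDegree - #A - #F) (hAB.symm.mono_right sdiff_subset)
    (fun p hp q hq _ => ?_) hu hv huv hk (by omega) hkB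
  have := two_mul_minDegree_le_card_add_card_inter_neighborFinset (hB p hp) (hB q hq)
  have hsub : (G.neighborFinset p ∩ G.neighborFinset q) \ F ⊆
      G.neighborFinset p ∩ G.neighborFinset q ∩ (A \ F) := fun z hz => by
    simp only [mem_sdiff, mem_inter] at hz ⊢
    exact ⟨hz.1, hB p hp hz.1.1, hz.2⟩
  have := le_card_sdiff F (G.neighborFinset p ∩ G.neighborFinset q)
  have := card_le_card hsub
  omega

lemma exists_isPath_length_two_mul_of_mem_left {A B : Finset V} (hAB : Disjoint A B)
    (hA : ∀ a ∈ A, G.neighborFinset a ⊆ B) (hB : ∀ b ∈ B, G.neighborFinset b ⊆ A)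
    {x y : V} (hx : x ∈ A) (hy : y ∈ A) (hxy : x ≠ y) (hBδ : #B < 2 * G.minDegree) {k : ℕ}
    (hk : 1 ≤ k) (hkδ : k + 1 + #A ≤ 2 * G.minDegree) (hkB : k ≤ #B) :
    ∃ w : G.Walk x y, w.IsPath ∧ w.length = 2 * k := by
  rcases hk.eq_or_lt with rfl | hk
  · obtain ⟨b, hb⟩ : (G.neighborFinset x ∩ G.neighborFinset y).Nonempty := by
      have := two_mul_minDegree_le_card_add_card_inter_neighborFinset (hA x hx) (hA y hy)
      rw [← card_pos]; omega
    simp only [mem_inter, mem_neighborFinset] at hb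
    exact ⟨_, isPath_cons_cons_nil hb.1 hb.2.symm hxy, rfl⟩
  obtain ⟨b, hb⟩ := card_pos.1 <|
    (show 0 < G.minDegree by omega).trans_le (minDegree_le_card_neighborFinset x)
  obtain ⟨b', hb'⟩ : (G.neighborFinset y \ {b}).Nonempty := by
    have := le_card_sdiff {b} (G.neighborFinset y)
    rw [card_singleton] at this
    have := minDegree_le_card_neighborFinset (G := G) y
    rw [← card_pos]; omega
  simp only [mem_sdiff, mem_singleton] at hb'
  obtain ⟨w, hw, hlen, hsupp⟩ := exists_isPath_length_two_mul_of_mem_right hAB hB {x, y}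
    (hA x hx hb) (hA y hy hb'.1) (Ne.symm hb'.2) (k := k - 1) (by omega)
    (by have := card_le_two (a := x) (b := y); omega) (by omega)
  rw [mem_neighborFinset] at hb hb'
  have hxw : x ∉ w.support := fun h => by
    simpa [Finset.disjoint_left.1 hAB hx] using hsupp x h
  have hyw : y ∉ w.support := fun h => by
    simpa [Finset.disjoint_left.1 hAB hy] using hsupp y h
  refine ⟨Walk.cons hb (w.concat hb'.1.symm), ?_, by simp [hlen]; omega⟩
  exact (hw.concat hyw _).cons (by simp [hxw, hxy])

end SimpleGraph

theorem bipartite_even_paths_general {V : Type*} [Fintype V] [DecidableEq V]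
    (G : SimpleGraph V) [DecidableRel G.Adj] (A B : Finset V)
    (hdisj : Disjoint A B)
    (hbip : ∀ u v, G.Adj u v → (u ∈ A ∧ v ∈ B) ∨ (u ∈ B ∧ v ∈ A))
    (hδ : (B.card : ℚ) / 2 + 1 ≤ (G.minDegree : ℚ))
    (x y : V) (hxy : x ≠ y) (hsame : (x ∈ A ∧ y ∈ A) ∨ (x ∈ B ∧ y ∈ B)) :
    ∀ t : ℕ, Even t → 2 ≤ t →
      (t : ℤ) ≤ 2 * (2 * (G.minDegree : ℤ) - A.card - 1) →
      ∃ w : G.Walk x y, w.IsPath ∧ w.length = t := by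
  rintro t ⟨k, rfl⟩ ht htδ
  have hA : ∀ a ∈ A, G.neighborFinset a ⊆ B := fun _ =>
    neighborFinset_subset_of_mem_left hdisj hbip
  have hB : ∀ b ∈ B, G.neighborFinset b ⊆ A := fun _ =>
    neighborFinset_subset_of_mem_left hdisj.symm fun u v h => (hbip u v h).symm
  have hBδ : #B + 2 ≤ 2 * G.minDegree := by
    exact_mod_cast (by linarith : (#B : ℚ) + 2 ≤ 2 * G.minDegree)
  obtain ⟨z, hz⟩ := card_pos.1 <|
    (show 0 < G.minDegree by omega).trans_le (minDegree_le_card_neighborFinset x)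
  have hδAB : G.minDegree ≤ #A ∧ G.minDegree ≤ #B := by
    rcases hbip x z ((G.mem_neighborFinset x z).1 hz) with h | h
    · exact ⟨minDegree_le_card_of_neighborFinset_subset (hB z h.2),
        minDegree_le_card_of_neighborFinset_subset (hA x h.1)⟩
    · exact ⟨minDegree_le_card_of_neighborFinset_subset (hB x h.1),
        minDegree_le_card_of_neighborFinset_subset (hA z h.2)⟩
  rcases hsame with ⟨hx, hy⟩ | ⟨hx, hy⟩
  · simpa [two_mul] using exists_isPath_length_two_mul_of_mem_left hdisj hA hB hx hy hxy
      (k := k) (by omega) (by omega) (by omega) (by omega)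
  · obtain ⟨w, hw, hlen, -⟩ := exists_isPath_length_two_mul_of_mem_right hdisj hB ∅ hx hy hxy
      (k := k) (by omega) (by simp only [card_empty]; omega) (by omega)
    exact ⟨w, hw, by omega⟩

/-- In a bipartite graph with parts `A`, `B`, `|A| ≤ |B|` and minimum degree
`δ ≥ |B|/2 + 1`, any two distinct vertices in the same part are joined by a
path of every even length `t` with `2 ≤ t ≤ 2(2δ - |A| - 1)`. -/
theorem bipartite_even_paths {V : Type*} [Fintype V] [DecidableEq V]
    (G : SimpleGraph V) [DecidableRel G.Adj] (A B : Finset V)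
    (hdisj : Disjoint A B) (hcover : A ∪ B = univ)
    (hbip : ∀ u v, G.Adj u v → (u ∈ A ∧ v ∈ B) ∨ (u ∈ B ∧ v ∈ A))
    (hAB : A.card ≤ B.card)
    (hδ : (B.card : ℚ) / 2 + 1 ≤ (G.minDegree : ℚ))
    (x y : V) (hxy : x ≠ y) (hsame : (x ∈ A ∧ y ∈ A) ∨ (x ∈ B ∧ y ∈ B)) :
    ∀ t : ℕ, Even t → 2 ≤ t →
      (t : ℤ) ≤ 2 * (2 * (G.minDegree : ℤ) - A.card - 1) →
      ∃ w : G.Walk x y, w.IsPath ∧ w.length = t :=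
  bipartite_even_paths_general G A B hdisj hbip hδ x y hxy hsame
end

section
/- Let G be a bipartite graph with parts A and B, |A| ≤ |B|, and minimum degree δ ≥ |B|/2 + 1. If x ∈ A and y ∈ B, then G contains an x–y path of length t for every odd t with 3 ≤ t ≤ 2(2δ - |A| - 1). -/
open SimpleGraph Finset

/-- In a bipartite graph with parts `A`, `B`, `|A| ≤ |B|` and minimum degree
`δ ≥ |B|/2 + 1`, any `x ∈ A` and `y ∈ B` are joined by a path of every odd
length `t` with `3 ≤ t ≤ 2(2δ - |A| - 1)`. -/
theorem bipartite_odd_paths {V : Type*} [Fintype V] [DecidableEq V]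
    (G : SimpleGraph V) [DecidableRel G.Adj] (A B : Finset V)
    (hdisj : Disjoint A B) (hcover : A ∪ B = univ)
    (hbip : ∀ u v, G.Adj u v → (u ∈ A ∧ v ∈ B) ∨ (u ∈ B ∧ v ∈ A))
    (hAB : A.card ≤ B.card)
    (hδ : (B.card : ℚ) / 2 + 1 ≤ (G.minDegree : ℚ))
    (x y : V) (hx : x ∈ A) (hy : y ∈ B) :
    ∀ t : ℕ, Odd t → 3 ≤ t →
      (t : ℤ) ≤ 2 * (2 * (G.minDegree : ℤ) - A.card - 1) →
      ∃ w : G.Walk x y, w.IsPath ∧ w.length = t := by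
  have hnotB : ∀ {u}, u ∈ A → u ∉ B := fun hu => Finset.disjoint_left.mp hdisj hu
  have hne : ∀ {u v}, u ∈ A → v ∈ B → u ≠ v := by
    intro u v hu hv h; exact hnotB hu (h ▸ hv)
  have sideB : ∀ {u v}, G.Adj u v → u ∈ A → v ∈ B := by
    intro u v h hu
    rcases hbip u v h with ⟨_, h2⟩ | ⟨h1, _⟩
    · exact h2
    · exact absurd h1 (hnotB hu)
  have sideA : ∀ {u v}, G.Adj u v → u ∈ B → v ∈ A := by
    intro u v h hu
    rcases hbip u v h with ⟨h1, _⟩ | ⟨_, h2⟩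
    · exact absurd hu (hnotB h1)
    · exact h2
  have nsubB : ∀ {u}, u ∈ A → G.neighborFinset u ⊆ B := by
    intro u hu v hv; exact sideB ((G.mem_neighborFinset u v).mp hv) hu
  have nsubA : ∀ {u}, u ∈ B → G.neighborFinset u ⊆ A := by
    intro u hu v hv; exact sideA ((G.mem_neighborFinset u v).mp hv) hu
  have hdeg : ∀ u, G.minDegree ≤ (G.neighborFinset u).card := fun u =>
    G.minDegree_le_degree u
  have hδA : G.minDegree ≤ A.card :=
    le_trans (hdeg y) (Finset.card_le_card (nsubA hy))
  have hδB : B.card + 2 ≤ 2 * G.minDegree := by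
    have h : (B.card : ℚ) + 2 ≤ 2 * (G.minDegree : ℚ) := by linarith
    exact_mod_cast h
  have hinter : ∀ {b}, b ∈ B →
      2 * G.minDegree ≤ (G.neighborFinset b ∩ G.neighborFinset y).card + A.card := by
    intro b hb
    have h1 : (G.neighborFinset b ∪ G.neighborFinset y).card ≤ A.card :=
      Finset.card_le_card (Finset.union_subset (nsubA hb) (nsubA hy))
    have h2 := Finset.card_union_add_card_inter (G.neighborFinset b) (G.neighborFinset y)
    have h3 := hdeg b
    have h4 := hdeg y
    omega
  -- counting lemma : number of A-vertices on the support of a walk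
  have hcount : ∀ {u v : V} (w : G.Walk u v),
      (u ∈ A → (w.support.filter (fun z => z ∈ A)).length = w.length / 2 + 1) ∧
      (u ∈ B → (w.support.filter (fun z => z ∈ A)).length = (w.length + 1) / 2) := by
    intro u v w
    induction w with
    | nil =>
      constructor
      · intro hu; simp [List.filter_cons, hu]
      · intro hu; simp [List.filter_cons, hnotB (u := u), hu, Finset.disjoint_right.mp hdisj hu]
    | cons h p ih =>
      rename_i u' c v'
      constructor
      · intro hu
        have hc : c ∈ B := sideB h hu
        have h2 := ih.2 hc
        simp only [Walk.support_cons, List.filter_cons, Walk.length_cons, decide_eq_true_eq,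
          if_pos hu, List.length_cons]
        omega
      · intro hu
        have hc : c ∈ A := sideA h hu
        have h1 := ih.1 hc
        have hu' : u' ∉ A := Finset.disjoint_right.mp hdisj hu
        simp only [Walk.support_cons, List.filter_cons, Walk.length_cons, decide_eq_true_eq,
          if_neg hu']
        omega
  -- support counts for a path from y to x of odd length
  have hsets : ∀ (r : G.Walk y x), r.IsPath → ∀ k, 2 ≤ k → r.length = 2 * k - 1 →
      (r.support.toFinset ∩ A).card = k ∧ (r.support.toFinset ∩ B).card = k := by
    intro r hr k hk hl
    have h1 := (hcount r).2 hy
    have hnd : r.support.Nodup := hr.support_nodup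
    have hndf : (r.support.filter (fun z => z ∈ A)).Nodup := hnd.filter _
    have hcardA : (r.support.toFinset ∩ A).card = k := by
      have heq : (r.support.filter (fun z => z ∈ A)).toFinset = r.support.toFinset ∩ A := by
        ext z
        simp [List.mem_filter, List.mem_toFinset]
      rw [← heq, List.toFinset_card_of_nodup hndf, h1, hl]
      omega
    refine ⟨hcardA, ?_⟩
    have hS : r.support.toFinset.card = r.length + 1 := by
      rw [List.toFinset_card_of_nodup hnd, Walk.length_support]
    have hdisj2 : Disjoint (r.support.toFinset ∩ A) (r.support.toFinset ∩ B) :=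
      hdisj.mono Finset.inter_subset_right Finset.inter_subset_right
    have hsplit : (r.support.toFinset ∩ A).card + (r.support.toFinset ∩ B).card
        = r.support.toFinset.card := by
      rw [← Finset.card_union_of_disjoint hdisj2, ← Finset.inter_union_distrib_left, hcover,
        Finset.inter_univ]
    omega
  -- main construction
  have main : ∀ k, 2 ≤ k → A.card + k + 1 ≤ 2 * G.minDegree →
      ∃ r : G.Walk y x, r.IsPath ∧ r.length = 2 * k - 1 := by
    intro k hk
    induction k, hk using Nat.le_induction with
    | base =>
      intro hbd
      obtain ⟨b, hb1, hb2⟩ : ∃ b, b ∈ G.neighborFinset x ∧ b ≠ y := by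
        by_contra hc
        push_neg at hc
        have hsub : G.neighborFinset x ⊆ {y} := fun z hz =>
          Finset.mem_singleton.mpr (hc z hz)
        have h1 := Finset.card_le_card hsub
        have h2 := hdeg x
        simp only [Finset.card_singleton] at h1
        omega
      have hbB : b ∈ B := nsubB hx hb1
      obtain ⟨a, ha1, ha2⟩ : ∃ a, a ∈ G.neighborFinset b ∩ G.neighborFinset y ∧ a ≠ x := by
        by_contra hc
        push_neg at hc
        have hsub : G.neighborFinset b ∩ G.neighborFinset y ⊆ {x} := fun z hz =>
          Finset.mem_singleton.mpr (hc z hz)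
        have h1 := Finset.card_le_card hsub
        have h2 := hinter hbB
        simp only [Finset.card_singleton] at h1
        omega
      rw [Finset.mem_inter] at ha1
      have haA : a ∈ A := nsubA hy ha1.2
      refine ⟨Walk.cons ((G.mem_neighborFinset y a).mp ha1.2)
        (Walk.cons (((G.mem_neighborFinset b a).mp ha1.1).symm)
        (Walk.cons (((G.mem_neighborFinset x b).mp hb1).symm) Walk.nil)), ?_, by simp⟩
      rw [Walk.isPath_def]
      simp only [Walk.support_cons, Walk.support_nil, List.nodup_cons, List.mem_cons,
        List.mem_singleton, List.not_mem_nil, not_or, List.nodup_nil, and_true, not_false_iff]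
      exact ⟨⟨(hne haA hy).symm, Ne.symm hb2, (hne hx hy).symm⟩,
        ⟨hne haA hbB, ha2⟩, fun hbx => hne hx hbB hbx.symm⟩
    | succ k hk ih =>
      intro hbd
      obtain ⟨r, hr, hrl⟩ := ih (by omega)
      obtain ⟨hA', hB'⟩ := hsets r hr k hk hrl
      cases r with
      | nil => simp only [Walk.length_nil] at hrl; omega
      | cons h p =>
        rename_i c
        have hcA : c ∈ A := sideA h hy
        have hp : p.IsPath := hr.of_cons
        have hyp : y ∉ p.support := ((Walk.cons_isPath_iff h p).mp hr).2
        obtain ⟨b, hb1, hb2⟩ :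
            ∃ b, b ∈ G.neighborFinset c ∧ b ∉ (Walk.cons h p).support.toFinset := by
          by_contra hc
          push_neg at hc
          have hsub : G.neighborFinset c ⊆ (Walk.cons h p).support.toFinset ∩ B :=
            fun z hz => Finset.mem_inter.mpr ⟨hc z hz, nsubB hcA hz⟩
          have h1 := Finset.card_le_card hsub
          have h2 := hdeg c
          omega
        have hbB : b ∈ B := nsubB hcA hb1
        obtain ⟨a, ha1, ha2⟩ : ∃ a, a ∈ G.neighborFinset b ∩ G.neighborFinset y ∧
            a ∉ (Walk.cons h p).support.toFinset := by
          by_contra hc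
          push_neg at hc
          have hsub : G.neighborFinset b ∩ G.neighborFinset y ⊆
              (Walk.cons h p).support.toFinset ∩ A :=
            fun z hz => Finset.mem_inter.mpr
              ⟨hc z hz, nsubA hy (Finset.mem_inter.mp hz).2⟩
          have h1 := Finset.card_le_card hsub
          have h2 := hinter hbB
          omega
        rw [Finset.mem_inter] at ha1
        have haA : a ∈ A := nsubA hy ha1.2
        simp only [List.mem_toFinset, Walk.support_cons, List.mem_cons, not_or] at hb2 ha2
        refine ⟨Walk.cons ((G.mem_neighborFinset y a).mp ha1.2)
          (Walk.cons (((G.mem_neighborFinset b a).mp ha1.1).symm)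
          (Walk.cons (((G.mem_neighborFinset c b).mp hb1).symm) p)), ?_, ?_⟩
        · rw [Walk.cons_isPath_iff, Walk.cons_isPath_iff, Walk.cons_isPath_iff]
          refine ⟨⟨⟨hp, hb2.2⟩, ?_⟩, ?_⟩
          · simp only [Walk.support_cons, List.mem_cons, not_or]
            exact ⟨hne haA hbB, ha2.2⟩
          · simp only [Walk.support_cons, List.mem_cons, not_or]
            exact ⟨(Ne.symm ha2.1), (Ne.symm hb2.1), hyp⟩
        · simp only [Walk.length_cons] at hrl ⊢
          omega
  -- wrap-up
  intro t hodd ht3 htb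
  obtain ⟨m, hm⟩ := hodd
  have hkb : A.card + (m + 1) + 1 ≤ 2 * G.minDegree := by
    have hc : ((2 * m + 1 : ℕ) : ℤ) ≤ 2 * (2 * (G.minDegree : ℤ) - A.card - 1) := by
      rw [← hm]; exact htb
    push_cast at hc
    omega
  obtain ⟨r, hr, hrl⟩ := main (m + 1) (by omega) hkb
  refine ⟨r.reverse, hr.reverse, ?_⟩
  rw [Walk.length_reverse, hrl]
  omega
end

section
/- Let G be a bipartite graph with parts A and B, |A| ≤ |B|, and minimum degree δ ≥ |B|/2 + 1. Then G contains a cycle of length t for every even t with 4 ≤ t ≤ 2(2δ - |A| - 1). -/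
open SimpleGraph Finset

/-- `G` contains a cycle of length `t`. -/
def HasCycleLen {V : Type*} (G : SimpleGraph V) (t : ℕ) : Prop :=
  ∃ (v : V) (w : G.Walk v v), w.IsCycle ∧ w.length = t

/-!
Write `t = 2k`. Two vertices of `B` have at least `2δ - |A| ≥ k + 1` common neighbours, all in
`A`. Choose distinct `b₀, …, b_{k-1} ∈ B` (possible since `k < δ ≤ |B|`); by Hall's theorem there
are distinct `aᵢ` with `aᵢ` a common neighbour of `bᵢ` and `bᵢ₊₁` (indices mod `k`), and then
`b₀ a₀ b₁ a₁ ⋯ b_{k-1} a_{k-1}` is a cycle of length `2k`.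
-/

theorem Finset.exists_injective_mem_of_card_le {ι α : Type*} [Fintype ι] [DecidableEq α]
    (t : ι → Finset α) (ht : ∀ i, Fintype.card ι ≤ #(t i)) :
    ∃ f : ι → α, Function.Injective f ∧ ∀ i, f i ∈ t i := by
  refine (all_card_le_biUnion_card_iff_exists_injective t).mp fun s ↦ ?_
  obtain rfl | ⟨i, hi⟩ := s.eq_empty_or_nonempty
  · simp
  · calc #s ≤ Fintype.card ι := card_le_univ s
      _ ≤ #(t i) := ht i
      _ ≤ #(s.biUnion t) := card_le_card (subset_biUnion_of_mem t hi)

namespace SimpleGraph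

variable {V : Type*} {G : SimpleGraph V}

theorem IsBipartiteWith.degree_add_degree_le_card_inter_add [Fintype V] [DecidableRel G.Adj]
    [DecidableEq V] {s t : Finset V} (h : G.IsBipartiteWith s t) {u v : V} (hu : u ∈ t)
    (hv : v ∈ t) :
    G.degree u + G.degree v ≤ #(G.neighborFinset u ∩ G.neighborFinset v) + #s := by
  rw [← card_neighborFinset_eq_degree, ← card_neighborFinset_eq_degree,
    ← card_union_add_card_inter, add_comm]
  gcongr
  exact union_subset (isBipartiteWith_neighborFinset_subset' h hu)
    (isBipartiteWith_neighborFinset_subset' h hv)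

theorem IsBipartiteWith.minDegree_le_card [Fintype V] [DecidableRel G.Adj] {s t : Finset V}
    (h : G.IsBipartiteWith s t) : G.minDegree ≤ #t := by
  cases isEmpty_or_nonempty V
  · simp [minDegree_of_subsingleton]
  obtain ⟨v, hv⟩ := G.exists_minimal_degree_vertex
  rcases (G.degree v).eq_zero_or_pos with hv0 | hvpos
  · omega
  obtain ⟨w, hvw⟩ := (G.degree_pos_iff_exists_adj v).mp hvpos
  rcases h.mem_of_adj hvw with ⟨hvs, -⟩ | ⟨-, hws⟩
  · exact hv ▸ isBipartiteWith_degree_le h hvs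
  · exact (G.minDegree_le_degree w).trans (isBipartiteWith_degree_le h hws)

theorem cycleGraph_isContained_of_adj_succ {n : ℕ} (c : ℕ → V) (hc : Set.InjOn c (Set.Iio n))
    (hadj : ∀ i < n, G.Adj (c i) (c (i + 1))) (hclose : c n = c 0) : cycleGraph n ⊑ G := by
  refine ⟨Hom.toCopy ⟨fun i ↦ c i, fun {u v} huv ↦ ?_⟩ fun u v huv ↦ Fin.ext (hc u.2 v.2 huv)⟩
  have adj_of_sub_eq_one : ∀ u v : Fin n, (u - v).val = 1 → G.Adj (c v) (c u) := by
    intro u v h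
    rcases le_or_gt v u with hle | hlt
    · rw [Fin.coe_sub_iff_le.mpr hle] at h
      have := hadj v v.2
      rwa [show (v : ℕ) + 1 = u by omega] at this
    · rw [Fin.coe_sub_iff_lt.mpr hlt] at h
      have := hadj v v.2
      rwa [show (v : ℕ) + 1 = n by omega, hclose, show (0 : ℕ) = u by omega] at this
  rcases cycleGraph_adj'.mp huv with h | h
  · exact (adj_of_sub_eq_one u v h).symm
  · exact adj_of_sub_eq_one v u h

open Fin.NatCast in
theorem cycleGraph_isContained_of_alternating {k : ℕ} [NeZero k] (b a : Fin k → V)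
    (hb : Function.Injective b) (ha : Function.Injective a) (hba : ∀ i j, b i ≠ a j)
    (hadj_ba : ∀ i, G.Adj (b i) (a i)) (hadj_ab : ∀ i, G.Adj (a i) (b (i + 1))) :
    cycleGraph (2 * k) ⊑ G := by
  -- `c = b₀ a₀ b₁ a₁ ⋯`; the cast to `Fin k` reduces indices mod `k`, which closes the cycle.
  let c : ℕ → V := fun m ↦ if m % 2 = 0 then b (m / 2 : ℕ) else a (m / 2 : ℕ)
  refine cycleGraph_isContained_of_adj_succ c ?_ (fun m _ ↦ ?_) ?_
  · intro m hm m' hm' h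
    simp only [Set.mem_Iio] at hm hm'
    have hhalf : ∀ x y : ℕ, x < 2 * k → y < 2 * k → ((x / 2 : ℕ) : Fin k) = (y / 2 : ℕ) →
        x / 2 = y / 2 := fun x y hx hy h ↦ by
      simpa [Fin.ext_iff, Fin.val_natCast, Nat.mod_eq_of_lt (by omega : x / 2 < k),
        Nat.mod_eq_of_lt (by omega : y / 2 < k)] using h
    simp only [c] at h
    split_ifs at h
    · have := hhalf m m' hm hm' (hb h); omega
    · exact absurd h (hba _ _)
    · exact absurd h.symm (hba _ _)
    · have := hhalf m m' hm hm' (ha h); omega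
  · simp only [c]
    rcases Nat.mod_two_eq_zero_or_one m with h | h
    · rw [if_pos h, if_neg (by omega), show (m + 1) / 2 = m / 2 by omega]
      exact hadj_ba _
    · rw [if_neg (by omega), if_pos (by omega), show (m + 1) / 2 = m / 2 + 1 by omega,
        Nat.cast_succ]
      exact hadj_ab _
  · simp [c]

end SimpleGraph

theorem bipartite_even_cycles_general {V : Type*} [Fintype V] [DecidableEq V]
    (G : SimpleGraph V) [DecidableRel G.Adj] (A B : Finset V)
    (hdisj : Disjoint A B)
    (hbip : ∀ u v, G.Adj u v → (u ∈ A ∧ v ∈ B) ∨ (u ∈ B ∧ v ∈ A)) :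
    ∀ t : ℕ, Even t → 4 ≤ t →
      (t : ℤ) ≤ 2 * (2 * (G.minDegree : ℤ) - A.card - 1) →
      HasCycleLen G t := by
  rintro t ⟨k, rfl⟩ ht htδ
  have hG : G.IsBipartiteWith A B := ⟨disjoint_coe.mpr hdisj, hbip⟩
  have hδB := hG.minDegree_le_card
  have hδA := hG.symm.minDegree_le_card
  have : NeZero k := ⟨by omega⟩
  obtain ⟨e⟩ : Nonempty (Fin k ↪ B) := Function.Embedding.nonempty_of_card_le (by
    simp only [Fintype.card_fin, Fintype.card_coe]; omega)
  let b : Fin k → V := fun i ↦ e i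
  have hbB : ∀ i, b i ∈ B := fun i ↦ (e i).2
  obtain ⟨a, ha, haN⟩ := exists_injective_mem_of_card_le
    (fun i ↦ G.neighborFinset (b i) ∩ G.neighborFinset (b (i + 1))) fun i ↦ by
      have := hG.degree_add_degree_le_card_inter_add (hbB i) (hbB (i + 1))
      have := G.minDegree_le_degree (b i)
      have := G.minDegree_le_degree (b (i + 1))
      simp only [Fintype.card_fin]
      omega
  simp only [mem_inter, mem_neighborFinset] at haN
  have hcycle := cycleGraph_isContained_of_alternating b a
    (Subtype.val_injective.comp e.injective) ha
    (fun i j h ↦ disjoint_left.mp hdisj (h ▸ hG.mem_of_mem_adj' (hbB j) (haN j).1.symm) (hbB i))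
    (fun i ↦ (haN i).1) (fun i ↦ (haN i).2.symm)
  exact (cycleGraph_isContained_iff (by omega)).mp (by rwa [two_mul] at hcycle)

/-- In a bipartite graph with parts `A`, `B`, `|A| ≤ |B|` and minimum degree
`δ ≥ |B|/2 + 1`, there is a cycle of every even length `t` with
`4 ≤ t ≤ 2(2δ - |A| - 1)`. -/
theorem bipartite_even_cycles {V : Type*} [Fintype V] [DecidableEq V]
    (G : SimpleGraph V) [DecidableRel G.Adj] (A B : Finset V)
    (hdisj : Disjoint A B) (hcover : A ∪ B = univ)
    (hbip : ∀ u v, G.Adj u v → (u ∈ A ∧ v ∈ B) ∨ (u ∈ B ∧ v ∈ A))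
    (hAB : A.card ≤ B.card)
    (hδ : (B.card : ℚ) / 2 + 1 ≤ (G.minDegree : ℚ)) :
    ∀ t : ℕ, Even t → 4 ≤ t →
      (t : ℤ) ≤ 2 * (2 * (G.minDegree : ℤ) - A.card - 1) →
      HasCycleLen G t :=
  bipartite_even_cycles_general G A B hdisj hbip
end

section
/- Let G be a Hamiltonian graph of order 2n such that neither G nor its complement contains a cycle of length 2n - 1. Then there is a partition V(G) = U₁ ∪ U₂ with |U₁| = |U₂| = n such that both U₁ and U₂ are independent sets in G; moreover there exists a vertex u such that G - u is isomorphic to the complete bipartite graph K_{n,n-1}. -/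
/-!
Label the Hamiltonian cycle by `ZMod (2n)`. Two crossing chords `{0, d}` and `{d - 1, -2}` of
the cycle would close a cycle of length `2n - 1` in `G` that misses the vertex `-1`; in particular
vertices at distance two along the cycle are adjacent in `Gᶜ`. If `G` had a chord `{0, d}` with `d`
even, the two non-edges `{d - 1, -2}` and `{d + 1, 2}` forced in this way would join the odd
vertices and the even vertices other than `0`, each run through in steps of two, into a
`(2n - 1)`-cycle of `Gᶜ`. Hence the two parity classes are independent in `G`, that is, cliques
in `Gᶜ`, and then two disjoint non-edges of `G` between the classes would again give a
`(2n - 1)`-cycle of `Gᶜ`. So the non-edges between the classes pairwise meet, and being bipartite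
they form a star with some centre `u`: `G - u` is complete bipartite with sides `n` and `n - 1`.
-/

open SimpleGraph Finset

section

variable {V W : Type*} {G : SimpleGraph V}

theorem HasCycleLen.of_comap {f : W → V} (hf : Function.Injective f) {k : ℕ}
    (h : HasCycleLen (G.comap f) k) : HasCycleLen G k := by
  obtain ⟨v, w, hw, rfl⟩ := h
  let φ := Embedding.comap ⟨f, hf⟩ G
  exact ⟨f v, w.map φ.toHom, (Walk.isCycle_map_iff_of_injective φ.injective).2 hw, w.length_map _⟩

theorem hasCycleLen_of_isChain {l : List V} (hl : l.IsChain G.Adj) (hnd : l.Nodup)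
    (hlen : 3 ≤ l.length) (hclose : ∀ x ∈ l.getLast?, ∀ y ∈ l.head?, G.Adj x y) :
    HasCycleLen G l.length := by
  have hne : l ≠ [] := by rintro rfl; simp at hlen
  have hadj : G.Adj (l.getLast hne) (l.head hne) :=
    hclose _ (List.getLast?_eq_some_getLast hne) _ (List.head?_eq_some_head hne)
  refine ⟨_, .cons hadj (.ofSupport l hne hl), ?_, by simp; omega⟩
  rw [Walk.isCycle_iff_isPath_tail_and_le_length]
  refine ⟨?_, by simp; omega⟩
  simpa [Walk.isPath_def] using hnd

theorem hasCycleLen_append {P Q : List V} (hP : P.IsChain G.Adj) (hQ : Q.IsChain G.Adj)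
    (hP₀ : P ≠ []) (hQ₀ : Q ≠ []) (hnd : (P ++ Q).Nodup) (hlen : 3 ≤ P.length + Q.length)
    (hPQ : ∀ x ∈ P.getLast?, ∀ y ∈ Q.head?, G.Adj x y)
    (hQP : ∀ x ∈ Q.getLast?, ∀ y ∈ P.head?, G.Adj x y) :
    HasCycleLen G (P.length + Q.length) := by
  rw [← List.length_append]
  refine hasCycleLen_of_isChain (List.isChain_append.2 ⟨hP, hQ, hPQ⟩) hnd (by simpa) ?_
  rw [List.getLast?_append_of_ne_nil _ hQ₀, List.head?_append_of_ne_nil _ hP₀]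
  exact hQP

theorem SimpleGraph.IsClique.isChain {s : Set V} (hs : G.IsClique s) {l : List V}
    (hnd : l.Nodup) (hl : ∀ x ∈ l, x ∈ s) : l.IsChain G.Adj :=
  (hnd.imp_of_mem fun hx hy hxy => hs (hl _ hx) (hl _ hy) hxy).isChain

theorem Finset.exists_list_nodup_head?_getLast? [DecidableEq V] {s : Finset V} {a b : V}
    (ha : a ∈ s) (hb : b ∈ s) (hab : a ≠ b) :
    ∃ l : List V, l.Nodup ∧ l.toFinset = s ∧ l.head? = some a ∧ l.getLast? = some b := by
  refine ⟨a :: (((s.erase a).erase b).toList ++ [b]), ?_, ?_, rfl, ?_⟩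
  · simp [List.nodup_append, hab, Finset.nodup_toList]
    tauto
  · ext x
    by_cases hxa : x = a <;> by_cases hxb : x = b <;> simp_all
  · rw [← List.cons_append, List.getLast?_concat]

theorem hasCycleLen_of_isClique [DecidableEq V] {A B : Finset V} (hA : G.IsClique (A : Set V))
    (hB : G.IsClique (B : Set V)) (hAB : Disjoint A B) {a b c d : V} (ha : a ∈ A) (hc : c ∈ A)
    (hac : a ≠ c) (hb : b ∈ B) (hd : d ∈ B) (hbd : b ≠ d) (hab : G.Adj a b) (hdc : G.Adj d c) :
    HasCycleLen G (#A + #B) := by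
  obtain ⟨P, hPnd, rfl, hPc, hPa⟩ := Finset.exists_list_nodup_head?_getLast? hc ha hac.symm
  obtain ⟨Q, hQnd, rfl, hQb, hQd⟩ := Finset.exists_list_nodup_head?_getLast? hb hd hbd
  have hP₂ : 2 ≤ P.length := by
    rw [← List.toFinset_card_of_nodup hPnd]
    exact Finset.one_lt_card.2 ⟨a, ha, c, hc, hac⟩
  have hQ₂ : 2 ≤ Q.length := by
    rw [← List.toFinset_card_of_nodup hQnd]
    exact Finset.one_lt_card.2 ⟨b, hb, d, hd, hbd⟩
  rw [List.toFinset_card_of_nodup hPnd, List.toFinset_card_of_nodup hQnd]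
  refine hasCycleLen_append (hA.isChain hPnd (by simp)) (hB.isChain hQnd (by simp))
    (List.ne_nil_of_length_pos (by omega)) (List.ne_nil_of_length_pos (by omega))
    (List.nodup_append.2 ⟨hPnd, hQnd, fun x hx y hy => ?_⟩) (by omega) ?_ ?_
  · rintro rfl
    exact Finset.disjoint_left.1 hAB (List.mem_toFinset.2 hx) (List.mem_toFinset.2 hy)
  · simpa [hPa, hQb] using hab
  · simpa [hPc, hQd] using hdc

theorem List.isChain_iterate {α : Type*} {R : α → α → Prop} {f : α → α}
    (h : ∀ x, R x (f x)) (a : α) (k : ℕ) : (List.iterate f a k).IsChain R := by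
  induction k generalizing a with
  | zero => simp
  | succ k ih =>
    cases k with
    | zero => simp
    | succ k => exact (ih (f a)).cons (by simpa using h a)

theorem List.head?_iterate {α : Type*} (f : α → α) (a : α) (k : ℕ) :
    (List.iterate f a (k + 1)).head? = some a :=
  rfl

theorem List.getLast?_iterate {α : Type*} (f : α → α) (a : α) (k : ℕ) :
    (List.iterate f a (k + 1)).getLast? = some (f^[k] a) := by
  rw [List.iterate_add, List.getLast?_append_of_ne_nil _ (by simp)]
  rfl

theorem List.nodup_iterate_add {M : Type*} [AddLeftCancelMonoid M] (a s : M) {k : ℕ}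
    (hk : k ≤ addOrderOf s) : (List.iterate (· + s) a k).Nodup := by
  rw [← List.range_map_iterate]
  simp only [add_right_iterate]
  refine List.nodup_range.map_on fun x hx y hy hxy =>
    nsmul_injOn_Iio_addOrderOf (x := s) ?_ ?_ ?_
  · simpa using (List.mem_range.1 hx).trans_le hk
  · simpa using (List.mem_range.1 hy).trans_le hk
  · simpa using hxy

theorem exists_forall_eq_or_eq {α : Type*} [Nonempty α] {R : α → α → Prop}
    (h : ∀ a b c d, R a b → R c d → a = c ∨ b = d) : ∃ u, ∀ a b, R a b → a = u ∨ b = u := by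
  by_cases hR : ∃ a b, R a b
  · obtain ⟨a, b, hab⟩ := hR
    by_cases hfst : ∀ x y, R x y → x = a
    · exact ⟨a, fun x y hxy => .inl (hfst x y hxy)⟩
    push Not at hfst
    obtain ⟨c, d, hcd, hca⟩ := hfst
    refine ⟨b, fun x y hxy => .inr ?_⟩
    by_contra hyb
    have hbd : b = d := (h a b c d hab hcd).resolve_left (Ne.symm hca)
    have hxa : a = x := (h a b x y hab hxy).resolve_right (Ne.symm hyb)
    have hxc : c = x := (h c d x y hcd hxy).resolve_right (hbd ▸ Ne.symm hyb)
    exact hca (hxc.trans hxa.symm)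
  · push Not at hR
    exact ⟨Classical.arbitrary α, fun x y hxy => (hR x y hxy).elim⟩

theorem SimpleGraph.nonempty_iso_completeBipartiteGraph {H : SimpleGraph W} [Finite W]
    (p : W → Prop) [DecidablePred p] (hH : ∀ x y, H.Adj x y ↔ (p x ↔ ¬ p y)) {a b : ℕ}
    (ha : Nat.card {x // p x} = a) (hb : Nat.card {x // ¬ p x} = b) :
    Nonempty (H ≃g completeBipartiteGraph (Fin a) (Fin b)) := by
  let φ : H ≃g completeBipartiteGraph {x // p x} {x // ¬ p x} :=
    { toEquiv := (Equiv.sumCompl p).symm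
      map_rel_iff' := fun {x y} => by
        by_cases hx : p x <;> by_cases hy : p y <;> simp [hx, hy, hH] }
  exact ⟨φ.trans (completeBipartiteGraphCongr (Finite.equivFinOfCardEq ha)
    (Finite.equivFinOfCardEq hb))⟩

theorem ZMod.two_ne_zero_of_lt {m : ℕ} (hm : 2 < m) : (2 : ZMod m) ≠ 0 := by
  rw [← Nat.cast_ofNat, Ne, ZMod.natCast_eq_zero_iff]
  exact fun h => by have := Nat.le_of_dvd two_pos h; omega

def parity (n : ℕ) : ZMod (2 * n) →+* ZMod 2 := ZMod.castHom (dvd_mul_right 2 n) (ZMod 2)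

@[simp]
theorem parity_two (n : ℕ) : parity n 2 = 0 := by
  rw [map_ofNat]; rfl

theorem card_filter_parity_eq (n : ℕ) [NeZero n] (p : ZMod 2) :
    #{x : ZMod (2 * n) | parity n x = p} = n := by
  have hshift : ∀ q, #{x : ZMod (2 * n) | parity n x = q + 1} = #{x | parity n x = q} := by
    intro q
    refine Finset.card_nbij' (· - 1) (· + 1) ?_ ?_ ?_ ?_ <;> intro x hx <;> simp_all
  have htotal := Finset.card_filter_add_card_filter_not (s := univ)
    fun x : ZMod (2 * n) => parity n x = 0
  have h01 : ∀ q : ZMod 2, ¬ q = 0 ↔ q = 1 := by decide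
  simp only [h01, card_univ, ZMod.card] at htotal
  have := hshift 0
  rw [zero_add] at this
  fin_cases p <;> simp <;> omega

theorem ZMod.addOrderOf_two (n : ℕ) : addOrderOf (2 : ZMod (2 * n)) = n := by
  have h := ZMod.addOrderOf_coe' (2 * n) two_ne_zero
  rw [Nat.cast_ofNat] at h
  rw [h, Nat.gcd_mul_right_left]
  omega

theorem parity_add_one_ne_zero {n : ℕ} {x : ZMod (2 * n)} (hx : parity n x = 0) : x + 1 ≠ 0 :=
  fun h => by simpa [hx] using congrArg (parity n) h

-- Indexing by `ZMod m` turns rotations and reflections of the cycle into ring operations.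
structure IsCycleLabeling (G : SimpleGraph V) {m : ℕ} (e : ZMod m → V) : Prop where
  injective : Function.Injective e
  adj : ∀ i, G.Adj (e i) (e (i + 1))

theorem SimpleGraph.Walk.IsCycle.isCycleLabeling {u : V} {w : G.Walk u u} (hw : w.IsCycle) :
    IsCycleLabeling G fun i : ZMod w.length => w.getVert i.val := by
  have h3 := hw.three_le_length
  have : NeZero w.length := ⟨by omega⟩
  refine ⟨fun i j hij => ZMod.val_injective _ (hw.getVert_injOn' ?_ ?_ hij), fun i => ?_⟩
  · have := ZMod.val_lt i; simp only [Set.mem_ofPred_eq]; omega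
  · have := ZMod.val_lt j; simp only [Set.mem_ofPred_eq]; omega
  have hi := ZMod.val_lt i
  rw [ZMod.val_add, ZMod.val_one'' (by omega)]
  rcases (show i.val + 1 ≤ w.length from hi).lt_or_eq with h | h
  · rw [Nat.mod_eq_of_lt h]
    exact w.adj_getVert_succ hi
  · rw [h, Nat.mod_self, Walk.getVert_zero]
    simpa [h] using w.adj_getVert_succ hi

namespace IsCycleLabeling

section

variable {m : ℕ} {e : ZMod m → V}

theorem comp_add_right (hl : IsCycleLabeling G e) (t : ZMod m) :
    IsCycleLabeling G fun i => e (i + t) :=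
  ⟨hl.injective.comp (add_left_injective t), fun i => by
    simpa [add_right_comm] using hl.adj (i + t)⟩

theorem comp_neg (hl : IsCycleLabeling G e) : IsCycleLabeling G fun i => e (-i) :=
  ⟨hl.injective.comp neg_injective, fun i => by
    convert (hl.adj (-i - 1)).symm using 2 <;> ring⟩

theorem hasCycleLen_sub_one_of_crossing (hl : IsCycleLabeling G e) (hm : 4 ≤ m) {d : ZMod m}
    (hd : d ≠ 0) (hd' : d + 1 ≠ 0) (h₁ : G.Adj (e 0) (e d)) (h₂ : G.Adj (e (d - 1)) (e (-2))) :
    HasCycleLen G (m - 1) := by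
  -- the cycle `0, 1, …, d - 1, -2, -3, …, d`
  have : NeZero m := ⟨by omega⟩
  obtain ⟨k, hk⟩ := Nat.exists_eq_add_one_of_ne_zero ((ZMod.val_ne_zero d).2 hd)
  have hdk : d = ((k + 1 : ℕ) : ZMod m) := by rw [← hk, ZMod.natCast_zmod_val]
  obtain ⟨l, rfl⟩ : ∃ l, m = k + l + 3 := by
    refine ⟨m - k - 3, ?_⟩
    have := ZMod.val_lt d
    suffices k + 2 ≠ m by omega
    rintro rfl
    exact hd' (by rw [hdk, ← Nat.cast_succ, ZMod.natCast_self])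
  have hzero : ((k + l + 3 : ℕ) : ZMod (k + l + 3)) = 0 := ZMod.natCast_self _
  push_cast at hdk hzero
  set P := List.iterate (· + 1) (0 : ZMod (k + l + 3)) (k + 1)
  set R := List.iterate (· + 1) ((· + 1)^[k + 1] (0 : ZMod (k + l + 3))) (l + 1)
  have hPR : P ++ R = List.iterate (· + 1) 0 (k + 1 + (l + 1)) := (List.iterate_add ..).symm
  apply HasCycleLen.of_comap hl.injective
  convert hasCycleLen_append (G := G.comap e) (P := P) (Q := R.reverse)
    (List.isChain_iterate hl.adj _ _)
    (List.isChain_reverse.2 (List.isChain_iterate (fun i => (hl.adj i).symm) _ _))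
    (by simp [P]) (by simp [R]) ?_ (by simp [P, R]; omega) ?_ ?_ using 1
  · simp [P, R]; omega
  · rw [((List.perm_append_left_iff P).2 R.reverse_perm).nodup_iff, hPR]
    exact List.nodup_iterate_add _ _ (by rw [ZMod.addOrderOf_one]; omega)
  · simp only [P, R, List.head?_reverse, List.getLast?_iterate, add_right_iterate,
      Option.mem_def, Option.some.injEq, comap_adj]
    rintro _ rfl _ rfl
    convert h₂ using 2 <;> simp [hdk]; linear_combination hzero
  · simp only [P, R, List.getLast?_reverse, List.head?_iterate, add_right_iterate,
      Option.mem_def, Option.some.injEq, comap_adj]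
    rintro _ rfl _ rfl
    convert h₁.symm using 2
    simp [hdk]

theorem not_adj_add_two (hl : IsCycleLabeling G e) (hm : 4 ≤ m) (hG : ¬ HasCycleLen G (m - 1))
    (i : ZMod m) : ¬ G.Adj (e i) (e (i + 2)) := by
  intro h
  have : Fact (1 < m) := ⟨by omega⟩
  refine hG ((hl.comp_add_right (i + 2)).hasCycleLen_sub_one_of_crossing hm one_ne_zero
    (by rw [one_add_one_eq_two]; exact ZMod.two_ne_zero_of_lt (by omega)) ?_ ?_)
  · simpa [add_comm] using hl.adj (i + 2)
  · simpa using h.symm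

theorem compl_adj_add_two (hl : IsCycleLabeling G e) (hm : 4 ≤ m) (hG : ¬ HasCycleLen G (m - 1))
    (i : ZMod m) : Gᶜ.Adj (e i) (e (i + 2)) :=
  ⟨hl.injective.ne (by simpa using ZMod.two_ne_zero_of_lt (m := m) (by omega)),
    hl.not_adj_add_two hm hG i⟩

end

variable {n : ℕ} {e : ZMod (2 * n) → V}

theorem hasCycleLen_compl_of_not_adj (hl : IsCycleLabeling G e) (hn : 2 ≤ n)
    (hG : ¬ HasCycleLen G (2 * n - 1)) {d : ZMod (2 * n)} (hpar : parity n d = 0)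
    (h₁ : ¬ G.Adj (e (d - 1)) (e (-2))) (h₂ : ¬ G.Adj (e (d + 1)) (e 2)) :
    HasCycleLen Gᶜ (2 * n - 1) := by
  -- the odd vertices `d + 1, d + 3, …, d - 1`, then the even ones `-2, -4, …, 2`
  have hm : 4 ≤ 2 * n := by omega
  obtain ⟨k, rfl⟩ : ∃ k, n = k + 2 := ⟨n - 2, by omega⟩
  have hzero : ((2 * (k + 2) : ℕ) : ZMod (2 * (k + 2))) = 0 := ZMod.natCast_self _
  push_cast at hzero
  set P := List.iterate (· + 2) (d + 1) (k + 2)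
  set Q := List.iterate (· + -2) (-2 : ZMod (2 * (k + 2))) (k + 1)
  have hparP : ∀ x ∈ P, parity (k + 2) x = 1 := by
    intro x hx
    obtain ⟨t, -, rfl⟩ := List.mem_iterate.1 hx
    simp [add_right_iterate, hpar]
  have hparQ : ∀ x ∈ Q, parity (k + 2) x = 0 := by
    intro x hx
    obtain ⟨t, -, rfl⟩ := List.mem_iterate.1 hx
    simp [add_right_iterate]
  have hchainP : P.IsChain (Gᶜ.comap e).Adj :=
    List.isChain_iterate (hl.compl_adj_add_two hm hG) _ _
  have hchainQ : Q.IsChain (Gᶜ.comap e).Adj := List.isChain_iterate (fun x => by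
    simpa using (hl.compl_adj_add_two hm hG (x + -2)).symm) _ _
  apply HasCycleLen.of_comap hl.injective
  convert hasCycleLen_append hchainP hchainQ
    (by simp [P]) (by simp [Q]) ?_ (by simp [P, Q]; omega) ?_ ?_ using 1
  · simp [P, Q]; omega
  · refine List.nodup_append.2 ⟨List.nodup_iterate_add _ _ (by rw [ZMod.addOrderOf_two]),
      List.nodup_iterate_add _ _ (by rw [addOrderOf_neg, ZMod.addOrderOf_two]; omega),
      fun x hx y hy hxy => ?_⟩
    simpa [hxy, hparQ y hy] using hparP x hx
  · simp only [P, Q, List.getLast?_iterate, List.head?_iterate, add_right_iterate,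
      Option.mem_def, Option.some.injEq, comap_adj]
    rintro _ rfl _ rfl
    refine ⟨hl.injective.ne fun h' => ?_, ?_⟩
    · simpa [hpar] using congrArg (parity (k + 2)) h'
    · convert h₁ using 3
      linear_combination hzero
  · simp only [P, Q, List.getLast?_iterate, List.head?_iterate, add_right_iterate,
      Option.mem_def, Option.some.injEq, comap_adj]
    rintro _ rfl _ rfl
    refine ⟨hl.injective.ne fun h' => ?_, fun h' => h₂ ?_⟩
    · simpa [hpar] using congrArg (parity (k + 2)) h'
    · convert h'.symm using 2
      linear_combination hzero

theorem not_adj_zero_of_parity_eq_zero (hl : IsCycleLabeling G e) (hn : 2 ≤ n)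
    (hG : ¬ HasCycleLen G (2 * n - 1)) (hGc : ¬ HasCycleLen Gᶜ (2 * n - 1))
    {d : ZMod (2 * n)} (hd : d ≠ 0) (hpar : parity n d = 0) : ¬ G.Adj (e 0) (e d) := by
  intro h
  have hm : 4 ≤ 2 * n := by omega
  refine hGc (hl.hasCycleLen_compl_of_not_adj hn hG hpar (fun h' => hG ?_) (fun h' => hG ?_))
  · exact hl.hasCycleLen_sub_one_of_crossing hm hd (parity_add_one_ne_zero hpar) h h'
  · exact hl.comp_neg.hasCycleLen_sub_one_of_crossing hm (neg_ne_zero.2 hd)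
      (parity_add_one_ne_zero (by simp [hpar])) (by simpa using h) (by simpa [add_comm] using h')

theorem not_adj_of_parity_eq (hl : IsCycleLabeling G e) (hn : 2 ≤ n)
    (hG : ¬ HasCycleLen G (2 * n - 1)) (hGc : ¬ HasCycleLen Gᶜ (2 * n - 1)) {x y : ZMod (2 * n)}
    (hxy : x ≠ y) (hpar : parity n x = parity n y) : ¬ G.Adj (e x) (e y) := by
  simpa using (hl.comp_add_right x).not_adj_zero_of_parity_eq_zero hn hG hGc
    (sub_ne_zero.2 hxy.symm) (by simp [hpar])

theorem isClique_compl_comap (hl : IsCycleLabeling G e) (hn : 2 ≤ n)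
    (hG : ¬ HasCycleLen G (2 * n - 1)) (hGc : ¬ HasCycleLen Gᶜ (2 * n - 1)) (p : ZMod 2) :
    (Gᶜ.comap e).IsClique {x | parity n x = p} := fun _ hx _ hy hxy =>
  ⟨hl.injective.ne hxy, hl.not_adj_of_parity_eq hn hG hGc hxy (hx.trans hy.symm)⟩

theorem eq_or_eq_of_not_adj (hl : IsCycleLabeling G e) (hn : 3 ≤ n)
    (hG : ¬ HasCycleLen G (2 * n - 1)) (hGc : ¬ HasCycleLen Gᶜ (2 * n - 1))
    {a b c d : ZMod (2 * n)} (hac : parity n a = parity n c) (hbd : parity n b = parity n d)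
    (hab : parity n a ≠ parity n b) (h₁ : ¬ G.Adj (e a) (e b)) (h₂ : ¬ G.Adj (e c) (e d)) :
    a = c ∨ b = d := by
  by_contra! ⟨hac', hbd'⟩
  have : NeZero n := ⟨by omega⟩
  set A : Finset (ZMod (2 * n)) := {x | parity n x = parity n a}
  set B : Finset (ZMod (2 * n)) := {x | parity n x = parity n b}
  obtain ⟨x, hx⟩ : ((A.erase a).erase c).Nonempty := by
    rw [← Finset.card_pos, card_erase_of_mem (by simp [A, hac, hac'.symm]),
      card_erase_of_mem (by simp [A]), card_filter_parity_eq]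
    omega
  simp only [mem_erase] at hx
  have hne : ∀ {y z}, parity n y ≠ parity n z → e y ≠ e z := fun h =>
    hl.injective.ne (ne_of_apply_ne _ h)
  -- `A.erase x` and `B` are cliques of `Gᶜ`, joined by the non-edges `ab` and `dc` of `G`
  refine hGc (HasCycleLen.of_comap hl.injective ?_)
  convert hasCycleLen_of_isClique (G := Gᶜ.comap e) (A := A.erase x) (B := B)
    ((hl.isClique_compl_comap (by omega) hG hGc (parity n a)).subset
      (by intro y; simp +contextual [A]))
    ((hl.isClique_compl_comap (by omega) hG hGc (parity n b)).subset (by intro y; simp [B]))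
    (disjoint_left.2 fun y hy hy' => hab (by simp_all [A, B])) (by simp [A, hx.2.1.symm])
    (by simp [A, hac, hx.1.symm]) hac' (by simp [B]) (by simp [B, hbd]) hbd'
    ⟨hne hab, h₁⟩ ⟨hne (by rwa [← hac, ← hbd, ne_comm]), fun h => h₂ h.symm⟩ using 1
  rw [card_erase_of_mem hx.2.2, card_filter_parity_eq, card_filter_parity_eq]
  omega

theorem exists_center (hl : IsCycleLabeling G e) (hn : 2 ≤ n) (hG : ¬ HasCycleLen G (2 * n - 1))
    (hGc : ¬ HasCycleLen Gᶜ (2 * n - 1)) :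
    ∃ u, ∀ x y, parity n x ≠ parity n y → ¬ G.Adj (e x) (e y) → x = u ∨ y = u := by
  let R a b := parity n a = 1 ∧ parity n b = 0 ∧ ¬ G.Adj (e a) (e b)
  have hR : ∀ a b c d, R a b → R c d → a = c ∨ b = d := by
    rintro a b c d ⟨ha, hb, hab⟩ ⟨hc, hd, hcd⟩
    obtain rfl | hn3 := hn.eq_or_lt
    · -- on a `4`-cycle, vertices of different parity are consecutive
      have : ∀ x y : ZMod (2 * 2), parity 2 x = 1 → parity 2 y = 0 → y = x + 1 ∨ x = y + 1 := by
        decide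
      rcases this a b ha hb with rfl | rfl
      · exact (hab (hl.adj a)).elim
      · exact (hab (hl.adj b).symm).elim
    · exact hl.eq_or_eq_of_not_adj hn3 hG hGc (ha.trans hc.symm) (hb.trans hd.symm)
        (by rw [ha, hb]; decide) hab hcd
  obtain ⟨u, hu⟩ := exists_forall_eq_or_eq hR
  refine ⟨u, fun x y hxy h => ?_⟩
  have : ∀ p q : ZMod 2, p ≠ q → p = 1 ∧ q = 0 ∨ q = 1 ∧ p = 0 := by decide
  rcases this _ _ hxy with ⟨hx, hy⟩ | ⟨hy, hx⟩
  · exact hu x y ⟨hx, hy, h⟩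
  · exact (hu y x ⟨hy, hx, fun h' => h h'.symm⟩).symm

theorem exists_coloring [Fintype V] (hl : IsCycleLabeling G e) (he : Function.Bijective e)
    (hn : 2 ≤ n) (hG : ¬ HasCycleLen G (2 * n - 1)) (hGc : ¬ HasCycleLen Gᶜ (2 * n - 1)) :
    ∃ c : V → ZMod 2, (∀ x y, G.Adj x y → c x ≠ c y) ∧ (∀ p, #{x | c x = p} = n) ∧
      ∃ u, ∀ x y, c x ≠ c y → ¬ G.Adj x y → x = u ∨ y = u := by
  have : NeZero n := ⟨by omega⟩
  let E := Equiv.ofBijective e he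
  obtain ⟨u, hu⟩ := hl.exists_center hn hG hGc
  refine ⟨fun x => parity n (E.symm x), fun x y hxy hpar => ?_, fun p => ?_, e u,
    fun x y hpar hxy => ?_⟩
  · obtain ⟨i, rfl⟩ := he.2 x
    obtain ⟨j, rfl⟩ := he.2 y
    have hpar' : parity n i = parity n j := by simpa [E] using hpar
    exact hl.not_adj_of_parity_eq hn hG hGc (fun h => G.ne_of_adj hxy (congrArg e h)) hpar' hxy
  · exact (Finset.card_equiv E.symm (by simp)).trans (card_filter_parity_eq n p)
  · obtain ⟨i, rfl⟩ := he.2 x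
    obtain ⟨j, rfl⟩ := he.2 y
    simpa [hl.injective.eq_iff] using hu i j (by simpa [E] using hpar) hxy

end IsCycleLabeling

section Coloring

variable [Fintype V] [DecidableEq V] {n : ℕ} {c : V → ZMod 2}

theorem exists_independent_halves (hc : ∀ x y, G.Adj x y → c x ≠ c y)
    (hcard : ∀ p, #{x | c x = p} = n) :
    ∃ U₁ U₂ : Finset V, Disjoint U₁ U₂ ∧ U₁ ∪ U₂ = univ ∧ #U₁ = n ∧ #U₂ = n ∧
      (∀ u ∈ U₁, ∀ v ∈ U₁, ¬ G.Adj u v) ∧ (∀ u ∈ U₂, ∀ v ∈ U₂, ¬ G.Adj u v) := by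
  have hind : ∀ p, ∀ u ∈ ({x | c x = p} : Finset V), ∀ v ∈ ({x | c x = p} : Finset V),
      ¬ G.Adj u v := by
    simp only [mem_filter, mem_univ, true_and]
    exact fun p u hu v hv h => hc u v h (hu.trans hv.symm)
  refine ⟨({x | c x = 0} : Finset V), ({x | c x = 1} : Finset V),
    disjoint_filter.2 fun x _ h0 h1 => ?_, ?_, hcard 0, hcard 1, hind 0, hind 1⟩
  · simp [h0] at h1
  · ext x
    simp only [mem_union, mem_filter, mem_univ, true_and]
    generalize c x = p
    revert p
    decide

theorem nonempty_induce_iso_completeBipartiteGraph (hc : ∀ x y, G.Adj x y → c x ≠ c y)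
    (hcard : ∀ p, #{x | c x = p} = n) {u : V}
    (hu : ∀ x y, c x ≠ c y → ¬ G.Adj x y → x = u ∨ y = u) :
    Nonempty ((G.induce {x | x ≠ u}) ≃g completeBipartiteGraph (Fin n) (Fin (n - 1))) := by
  have hZ : ∀ p q r : ZMod 2, p ≠ q ↔ (p ≠ r ↔ ¬ q ≠ r) := by decide
  refine nonempty_iso_completeBipartiteGraph (H := G.induce {x | x ≠ u}) (fun x => c x ≠ c u)
    (fun x y => ?_) ?_ ?_
  · rw [comap_adj, Function.Embedding.subtype_apply, Function.Embedding.subtype_apply,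
      ← hZ]
    refine ⟨hc _ _, fun hxy => ?_⟩
    by_contra h
    rcases hu _ _ hxy h with h' | h'
    exacts [x.2 h', y.2 h']
  · refine (Nat.card_congr (Equiv.subtypeSubtypeEquivSubtype (p := (· ∈ {x | x ≠ u}))
      (q := fun x => c x ≠ c u) fun h => by rintro rfl; exact h rfl)).trans ?_
    rw [Nat.card_eq_fintype_card, Fintype.card_subtype, ← hcard (c u + 1)]
    congr 1
    ext x
    simp only [mem_filter, mem_univ, true_and]
    generalize c x = p
    revert p
    generalize c u = q
    revert q
    decide
  · refine (Nat.card_congr (Equiv.subtypeSubtypeEquivSubtypeInter (· ∈ {x | x ≠ u})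
      fun x => ¬ c x ≠ c u)).trans ?_
    rw [Nat.card_eq_fintype_card, Fintype.card_subtype, ← hcard (c u),
      ← card_erase_of_mem (s := ({x | c x = c u} : Finset V)) (a := u) (by simp)]
    congr 1
    ext x
    simp

end Coloring

end

/-- If `G` is a Hamiltonian graph of order `2n` and neither `G` nor its
complement contains a cycle of length `2n - 1`, then `V(G)` splits into two
independent sets of size `n`, and `G` minus some vertex is `K_{n,n-1}`. -/
theorem hamiltonian_no_C_2n_sub_one {V : Type*} [Fintype V] [DecidableEq V]
    (G : SimpleGraph V) (n : ℕ) (hcard : Fintype.card V = 2 * n)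
    (hham : ∃ (v : V) (w : G.Walk v v), w.IsHamiltonianCycle)
    (hG : ¬ HasCycleLen G (2 * n - 1)) (hGc : ¬ HasCycleLen Gᶜ (2 * n - 1)) :
    ∃ U₁ U₂ : Finset V, Disjoint U₁ U₂ ∧ U₁ ∪ U₂ = univ ∧
      U₁.card = n ∧ U₂.card = n ∧
      (∀ u ∈ U₁, ∀ v ∈ U₁, ¬ G.Adj u v) ∧ (∀ u ∈ U₂, ∀ v ∈ U₂, ¬ G.Adj u v) ∧
      ∃ u : V, Nonempty
        ((G.induce {x | x ≠ u}) ≃g completeBipartiteGraph (Fin n) (Fin (n - 1))) := by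
  obtain ⟨v, w, hw⟩ := hham
  have hlen : w.length = 2 * n := hw.length_eq.trans hcard
  have hn : 2 ≤ n := by have := hw.isCycle.three_le_length; omega
  have : NeZero n := ⟨by omega⟩
  obtain ⟨e, hl⟩ : ∃ e : ZMod (2 * n) → V, IsCycleLabeling G e := by
    rw [← hlen]
    exact ⟨_, hw.isCycle.isCycleLabeling⟩
  have he : Function.Bijective e :=
    (Fintype.bijective_iff_injective_and_card e).2 ⟨hl.injective, by simp [hcard]⟩
  obtain ⟨c, hc, hcard', u, hu⟩ := hl.exists_coloring he hn hG hGc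
  obtain ⟨U₁, U₂, hdisj, hunion, h₁, h₂, hU₁, hU₂⟩ := exists_independent_halves hc hcard'
  exact ⟨U₁, U₂, hdisj, hunion, h₁, h₂, hU₁, hU₂, u,
    nonempty_induce_iso_completeBipartiteGraph hc hcard' hu⟩
end

section
/- Let G be a graph on 2n vertices with Hamiltonian cycle v₁, v₂, ..., v_{2n}, v₁, and suppose neither G nor its complement contains a cycle of length 2n - 1. Then both sets {v₁, v₃, ..., v_{2n-1}} and {v₂, v₄, ..., v_{2n}} are independent in G. -/
/-! Let `v₀ v₁ … v_{2n-1}` be the Hamiltonian cycle and suppose `G` has a chord `v₀v_d` with `d`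
even. If `d = 2`, skipping `v₁` along the Hamiltonian cycle gives a `(2n-1)`-cycle of `G`; hence
all pairs at distance two along the cycle are edges of `Gᶜ`, and `d = 2n - 2` is excluded likewise.
If `4 ≤ d ≤ 2n - 4`, each of `v₁v_{d+2}` and `v_{2n-1}v_{d-2}` would close a `(2n-1)`-cycle of `G`
through the chord, so both are edges of `Gᶜ`; together with the distance-two edges they close the
`(2n-1)`-cycle `v₁ v₃ … v_{2n-1} v_{d-2} v_{d-4} … v_{d+2}` of `Gᶜ`. -/

open SimpleGraph Finset

namespace SimpleGraph

variable {V : Type*} {G H : SimpleGraph V}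

theorem hasCycleLen_of_injOn {m : ℕ} (hm : 3 ≤ m) (f : ℕ → V) (hf : Set.InjOn f (Set.Iio m))
    (hadj : ∀ t, t + 1 < m → G.Adj (f t) (f (t + 1))) (hlast : G.Adj (f (m - 1)) (f 0)) :
    HasCycleLen G m := by
  have hstep : ∀ u v : Fin m, (u - v).val = 1 → G.Adj (f v) (f u) := by
    intro u v huv
    rcases le_or_gt v u with hvu | huv'
    · rw [Fin.coe_sub_iff_le.2 hvu] at huv
      simpa [show (u : ℕ) = v + 1 by omega] using hadj v (by omega)
    · rw [Fin.coe_sub_iff_lt.2 huv'] at huv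
      simpa [show (u : ℕ) = 0 by omega, show (v : ℕ) = m - 1 by omega] using hlast
  refine (cycleGraph_isContained_iff (by omega)).1 ⟨⟨⟨fun i => f i, fun {u v} huv => ?_⟩, ?_⟩⟩
  · rcases cycleGraph_adj'.1 huv with h | h
    exacts [(hstep u v h).symm, hstep v u h]
  · exact fun u v huv => Fin.ext (hf u.isLt v.isLt huv)

theorem hasCycleLen_comp {c : ℕ → V} {N m : ℕ} (hc : Set.InjOn c (Set.Iio N)) (hm : 3 ≤ m)
    {g : ℕ → ℕ} (hgN : ∀ t < m, g t < N) (hg : ∀ a < m, ∀ b < m, g a = g b → a = b)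
    (hadj : ∀ t, t + 1 < m → G.Adj (c (g t)) (c (g (t + 1))))
    (hlast : G.Adj (c (g (m - 1))) (c (g 0))) : HasCycleLen G m :=
  hasCycleLen_of_injOn hm (c ∘ g) (hc.comp (fun a ha b hb => hg a ha b hb) hgN) hadj hlast

theorem injOn_Iio_of_eq_iff_modEq {c : ℕ → V} {N : ℕ} (hc : ∀ a b, c a = c b ↔ a ≡ b [MOD N]) :
    Set.InjOn c (Set.Iio N) :=
  fun a ha b hb hab => ((hc a b).1 hab).eq_of_lt_of_lt ha hb

theorem hasCycleLen_of_adj_add_two {c : ℕ → V} {n d : ℕ}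
    (hc : ∀ a b, c a = c b ↔ a ≡ b [MOD 2 * n]) (harc : ∀ k, H.Adj (c k) (c (k + 2)))
    (hd : d % 2 = 0) (hd2 : 2 ≤ d) (hdn : d + 4 ≤ 2 * n) (h1 : H.Adj (c 1) (c (d + 2)))
    (h2 : H.Adj (c (2 * n - 1)) (c (d - 2))) : HasCycleLen H (2 * n - 1) := by
  /- the cycle `c 1, c 3, …, c (2n - 1), c (d - 2), c (d - 4), …, c 0, c (2n - 2), …, c (d + 2)`:
  all odd positions, then all even positions but `d` -/
  let g : ℕ → ℕ := fun t =>
    if t < n then 2 * t + 1 else if 2 * (t - n) + 2 ≤ d then d - 2 - 2 * (t - n)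
    else 2 * n + d - 2 - 2 * (t - n)
  have harc' : ∀ a b, b + 2 = a → H.Adj (c a) (c b) := fun a b hab => hab ▸ (harc b).symm
  have hwrap : H.Adj (c 0) (c (2 * n - 2)) := by
    have := harc (2 * n - 2)
    rw [show 2 * n - 2 + 2 = 0 + 2 * n by omega, (hc _ _).2 Nat.add_modEq_right] at this
    exact this.symm
  refine hasCycleLen_comp (injOn_Iio_of_eq_iff_modEq hc) (by omega) (g := g) ?_ ?_ ?_ ?_
  · intro t ht
    simp only [g]
    split_ifs <;> omega
  · intro a ha b hb hab
    simp only [g] at hab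
    split_ifs at hab <;> omega
  · intro t ht
    dsimp only [g]
    split_ifs
    all_goals first
      | omega
      | (convert h2 using 2 <;> omega)
      | exact harc' _ _ (by omega)
      | (convert harc (2 * t + 1) using 2; omega)
      | (convert hwrap using 2 <;> omega)
  · rw [show g (2 * n - 1 - 1) = d + 2 by simp only [g]; split_ifs <;> omega,
      show g 0 = 1 by simp only [g]; split_ifs <;> omega]
    exact h1.symm

/-- `c k` is the vertex at position `k mod N` of a cycle of length `N` in `G`. -/
structure IsCycleSeq (G : SimpleGraph V) (N : ℕ) (c : ℕ → V) : Prop where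
  eq_iff_modEq : ∀ a b, c a = c b ↔ a ≡ b [MOD N]
  adj : ∀ k, G.Adj (c k) (c (k + 1))

namespace IsCycleSeq

variable {N : ℕ} {c : ℕ → V}

theorem injOn (h : IsCycleSeq G N c) : Set.InjOn c (Set.Iio N) :=
  injOn_Iio_of_eq_iff_modEq h.eq_iff_modEq

theorem apply_period (h : IsCycleSeq G N c) : c N = c 0 :=
  (h.eq_iff_modEq N 0).2 (by simp [Nat.ModEq])

theorem adj_of_eq_add_one (h : IsCycleSeq G N c) {a b : ℕ} (hab : b = a + 1) :
    G.Adj (c a) (c b) :=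
  hab ▸ h.adj a

theorem adj_of_add_one_eq (h : IsCycleSeq G N c) {a b : ℕ} (hab : a = b + 1) :
    G.Adj (c a) (c b) :=
  (h.adj_of_eq_add_one hab).symm

theorem shift (h : IsCycleSeq G N c) (k : ℕ) : IsCycleSeq G N (fun t => c (k + t)) where
  eq_iff_modEq _ _ := (h.eq_iff_modEq _ _).trans Nat.ModEq.rfl.add_iff_left
  adj t := h.adj (k + t)

theorem adj_last (h : IsCycleSeq G N c) (hN : 0 < N) : G.Adj (c (N - 1)) (c 0) := by
  simpa [Nat.sub_add_cancel hN, h.apply_period] using h.adj (N - 1)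

theorem hasCycleLen_of_adj_zero_two (h : IsCycleSeq G N c) (hN : 4 ≤ N)
    (h02 : G.Adj (c 0) (c 2)) : HasCycleLen G (N - 1) := by
  -- the cycle `c 0, c 2, c 3, …, c (N - 1)`
  let g : ℕ → ℕ := fun t => if t = 0 then 0 else t + 1
  refine hasCycleLen_comp h.injOn (by omega) (g := g) ?_ ?_ ?_ ?_
  · intro t ht
    simp only [g]
    split_ifs <;> omega
  · intro a ha b hb hab
    simp only [g] at hab
    split_ifs at hab <;> omega
  · intro t ht
    dsimp only [g]
    split_ifs
    all_goals first
      | contradiction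
      | omega
      | (convert h02 using 2; omega)
      | exact h.adj_of_eq_add_one (by omega)
  · rw [show g (N - 1 - 1) = N - 1 by simp only [g]; split_ifs <;> omega]
    exact h.adj_last (by omega)

theorem hasCycleLen_of_adj_zero_of_adj_one (h : IsCycleSeq G N c) {d : ℕ} (hd : 0 < d)
    (hdN : d + 3 ≤ N) (h0d : G.Adj (c 0) (c d)) (h1 : G.Adj (c 1) (c (d + 2))) :
    HasCycleLen G (N - 1) := by
  -- the cycle `c 0, c d, c (d - 1), …, c 1, c (d + 2), c (d + 3), …, c (N - 1)`
  let g : ℕ → ℕ := fun t => if t = 0 then 0 else if t ≤ d then d + 1 - t else t + 1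
  refine hasCycleLen_comp h.injOn (by omega) (g := g) ?_ ?_ ?_ ?_
  · intro t ht
    simp only [g]
    split_ifs <;> omega
  · intro a ha b hb hab
    simp only [g] at hab
    split_ifs at hab <;> omega
  · intro t ht
    dsimp only [g]
    split_ifs
    all_goals first
      | contradiction
      | omega
      | (convert h0d using 2; omega)
      | (convert h1 using 2 <;> omega)
      | exact h.adj_of_eq_add_one (by omega)
      | exact h.adj_of_add_one_eq (by omega)
  · rw [show g (N - 1 - 1) = N - 1 by simp only [g]; split_ifs <;> omega]
    exact h.adj_last (by omega)

theorem hasCycleLen_of_adj_zero_of_adj_last (h : IsCycleSeq G N c) {d : ℕ} (hd : 3 ≤ d)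
    (hdN : d < N) (h0d : G.Adj (c 0) (c d)) (h2 : G.Adj (c (N - 1)) (c (d - 2))) :
    HasCycleLen G (N - 1) := by
  -- the cycle `c 0, c d, c (d + 1), …, c (N - 1), c (d - 2), c (d - 3), …, c 1`
  let g : ℕ → ℕ := fun t => if t = 0 then 0 else if t ≤ N - d then d - 1 + t else N - 1 - t
  refine hasCycleLen_comp h.injOn (by omega) (g := g) ?_ ?_ ?_ ?_
  · intro t ht
    simp only [g]
    split_ifs <;> omega
  · intro a ha b hb hab
    simp only [g] at hab
    split_ifs at hab <;> omega
  · intro t ht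
    dsimp only [g]
    split_ifs
    all_goals first
      | contradiction
      | omega
      | (convert h0d using 2; omega)
      | (convert h2 using 2 <;> omega)
      | exact h.adj_of_eq_add_one (by omega)
      | exact h.adj_of_add_one_eq (by omega)
  · rw [show g (N - 1 - 1) = 1 by simp only [g]; split_ifs <;> omega]
    exact h.adj_of_add_one_eq rfl

theorem apply_ne_apply_add (h : IsCycleSeq G N c) {d : ℕ} (hd : 0 < d) (hdN : d < N) (k : ℕ) :
    c k ≠ c (k + d) := by
  rw [Ne, h.eq_iff_modEq, Nat.modEq_iff_dvd' (Nat.le_add_right k d), Nat.add_sub_cancel_left]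
  exact fun hdvd => absurd (Nat.le_of_dvd hd hdvd) (by omega)

theorem not_adj_add_two (h : IsCycleSeq G N c) (hN : 4 ≤ N) (hG : ¬ HasCycleLen G (N - 1))
    (k : ℕ) : ¬ G.Adj (c k) (c (k + 2)) :=
  fun hk => hG ((h.shift k).hasCycleLen_of_adj_zero_two hN hk)

theorem compl_adj_add_two (h : IsCycleSeq G N c) (hN : 4 ≤ N) (hG : ¬ HasCycleLen G (N - 1))
    (k : ℕ) : Gᶜ.Adj (c k) (c (k + 2)) :=
  (compl_adj _ _ _).2 ⟨h.apply_ne_apply_add two_pos (by omega) k, h.not_adj_add_two hN hG k⟩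

theorem not_adj_zero_of_even {n : ℕ} (h : IsCycleSeq G (2 * n) c)
    (hG : ¬ HasCycleLen G (2 * n - 1)) (hGc : ¬ HasCycleLen Gᶜ (2 * n - 1)) {d : ℕ}
    (hd : d % 2 = 0) (hd0 : 0 < d) (hdn : d < 2 * n) : ¬ G.Adj (c 0) (c d) := by
  intro h0d
  have hn : 4 ≤ 2 * n := by omega
  rcases (by omega : d = 2 ∨ d = 2 * n - 2 ∨ 4 ≤ d ∧ d + 4 ≤ 2 * n) with rfl | rfl | ⟨hd4, hdn4⟩
  · exact h.not_adj_add_two hn hG 0 h0d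
  · refine h.not_adj_add_two hn hG (2 * n - 2) ?_
    rwa [show 2 * n - 2 + 2 = 2 * n by omega, h.apply_period, adj_comm]
  · have h1 : Gᶜ.Adj (c 1) (c (d + 2)) :=
      (compl_adj _ _ _).2 ⟨h.injOn.ne (by simp; omega) (by simp; omega) (by omega),
        fun h1 => hG (h.hasCycleLen_of_adj_zero_of_adj_one (by omega) (by omega) h0d h1)⟩
    have h2 : Gᶜ.Adj (c (2 * n - 1)) (c (d - 2)) :=
      (compl_adj _ _ _).2 ⟨h.injOn.ne (by simp; omega) (by simp; omega) (by omega),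
        fun h2 => hG (h.hasCycleLen_of_adj_zero_of_adj_last (by omega) hdn h0d h2)⟩
    exact hGc (hasCycleLen_of_adj_add_two h.eq_iff_modEq (h.compl_adj_add_two hn hG) hd
      (by omega) hdn4 h1 h2)

theorem not_adj_add_of_even {n : ℕ} (h : IsCycleSeq G (2 * n) c)
    (hG : ¬ HasCycleLen G (2 * n - 1)) (hGc : ¬ HasCycleLen Gᶜ (2 * n - 1)) {d : ℕ}
    (hd : d % 2 = 0) (hd0 : 0 < d) (hdn : d < 2 * n) (k : ℕ) : ¬ G.Adj (c k) (c (k + d)) :=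
  (h.shift k).not_adj_zero_of_even hG hGc hd hd0 hdn

end IsCycleSeq

theorem isCycleSeq_of_fin {N : ℕ} (hN : 0 < N) {v : Fin N → V} (hv : Function.Injective v)
    (hham : ∀ i : Fin N, G.Adj (v i) (v ⟨(i.val + 1) % N, Nat.mod_lt _ i.pos⟩)) :
    IsCycleSeq G N (fun k => v ⟨k % N, Nat.mod_lt _ hN⟩) where
  eq_iff_modEq _ _ := hv.eq_iff.trans Fin.mk.inj_iff
  adj k := by
    convert hham ⟨k % N, Nat.mod_lt _ hN⟩ using 3
    exact (Nat.mod_add_mod k N 1).symm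

end SimpleGraph

theorem alternate_sets_independent_general {V : Type*}
    (G : SimpleGraph V) (n : ℕ)
    (v : Fin (2 * n) → V) (hbij : Function.Bijective v)
    (hham : ∀ i : Fin (2 * n),
      G.Adj (v i) (v ⟨(i.val + 1) % (2 * n), Nat.mod_lt _ i.pos⟩))
    (hG : ¬ HasCycleLen G (2 * n - 1)) (hGc : ¬ HasCycleLen Gᶜ (2 * n - 1)) :
    ∀ i j : Fin (2 * n), i ≠ j → i.val % 2 = j.val % 2 → ¬ G.Adj (v i) (v j) := by
  intro i j hij hpar hadj
  have hN : 0 < 2 * n := i.pos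
  have h := isCycleSeq_of_fin hN hbij.injective hham
  have hv : ∀ i : Fin (2 * n), v ⟨i.val % (2 * n), Nat.mod_lt _ hN⟩ = v i :=
    fun i => congrArg v (Fin.ext (Nat.mod_eq_of_lt i.isLt))
  wlog hlt : i < j generalizing i j
  · exact this j i hij.symm hpar.symm hadj.symm (lt_of_le_of_ne (not_lt.1 hlt) hij.symm)
  have hji := h.not_adj_add_of_even hG hGc (d := j - i) (by omega) (by omega) (by omega) i
  rw [Nat.add_sub_cancel' hlt.le, hv, hv] at hji
  exact hji hadj

/-- If the vertices of `G` are listed along a Hamiltonian cycle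
`v 0, v 1, ..., v (2n-1)` and neither `G` nor its complement contains a
cycle of length `2n - 1`, then the vertices of even index and the vertices of
odd index form two independent sets of `G`. -/
theorem alternate_sets_independent {V : Type*} [Fintype V]
    (G : SimpleGraph V) (n : ℕ) (hcard : Fintype.card V = 2 * n)
    (v : Fin (2 * n) → V) (hbij : Function.Bijective v)
    (hham : ∀ i : Fin (2 * n),
      G.Adj (v i) (v ⟨(i.val + 1) % (2 * n), Nat.mod_lt _ i.pos⟩))
    (hG : ¬ HasCycleLen G (2 * n - 1)) (hGc : ¬ HasCycleLen Gᶜ (2 * n - 1)) :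
    ∀ i j : Fin (2 * n), i ≠ j → i.val % 2 = j.val % 2 → ¬ G.Adj (v i) (v j) :=
  alternate_sets_independent_general G n v hbij hham hG hGc
end
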